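/- Let 0 < q < 1, let ν be a positive integer, let z ∈ J_q and let s ∈ ℂ with Re(s) > ν + 1. Then Γ(s)·ζ_q^{(ν)}(s,z) = ∫_0^∞ t^{s−ν−1}·F_q^{+,ν}(t,z) dt, where the integral is over real t ∈ (0,∞) and t^{s−ν−1} := exp((s−ν−1)·log t). -/

import Mathlib

/-! The `n`-th summand of `F_q^{+,ν}(t,z)` is `q^{-ν(n+z)} e^{-A_n t}` with
`A_n = q^{-(n+z)} [n+z]_q = (q^{-(n+z)} - 1)/(1 - q)`. The condition `z ∈ J_q` says `Re A_0 > 0`,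
and `Re A_n ≥ q^{-n} Re A_0` grows geometrically, so for `Re s > ν` the integrals of the norms of
the summands of the Mellin transform are summable and it may be taken termwise. Each term gives
`Γ(s) A_n^{-s}`: the formula `∫ t^{s-1} e^{-At} dt = Γ(s) A^{-s}` extends from `A > 0` to
`Re A > 0` by analytic continuation in `A`. Finally `|Im ((n+z) log q)| < π/2` and
`|arg A_n| < π/2` give `Log [n+z]_q = (n+z) log q + Log A_n`, which turns
`q^{-ν(n+z)} A_n^{-s}` into the `n`-th term of `ζ_q^{(ν)}(s,z)`. -/

open Complex MeasureTheory

/-- `q^w := exp(w · log q)` with the real logarithm of `q`. -/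
noncomputable def qpow (q : ℝ) (w : ℂ) : ℂ := Complex.exp (w * Real.log q)

/-- `[w]_q := (1 - q^w)/(1 - q)`. -/
noncomputable def qbr (q : ℝ) (w : ℂ) : ℂ := (1 - qpow q w) / (1 - (q : ℂ))

/-- the `n`-th term of the series defining `F_q^{+,ν}(t,z)`. -/
noncomputable def FpTerm (q : ℝ) (ν : ℕ) (t z : ℂ) (n : ℕ) : ℂ :=
  qpow q (-(ν : ℂ) * ((n : ℂ) + z)) *
    Complex.exp (-t * qpow q (-((n : ℂ) + z)) * qbr q ((n : ℂ) + z))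

/-- `F_q^{+,ν}(t,z)`. -/
noncomputable def Fp (q : ℝ) (ν : ℕ) (t z : ℂ) : ℂ := t ^ ν * ∑' n : ℕ, FpTerm q ν t z n

/-- `ζ_q^{(ν)}(s,z) := Σ_{n≥0} q^{(n+z)(s−ν)} · [n+z]_q^{−s}`, where
`[n+z]_q^{−s} := exp(−s · Log [n+z]_q)` with the principal logarithm. -/
noncomputable def zetaQ (q : ℝ) (ν : ℕ) (s z : ℂ) : ℂ :=
  ∑' n : ℕ, qpow q (((n : ℂ) + z) * (s - (ν : ℂ))) *
    Complex.exp (-s * Complex.log (qbr q ((n : ℂ) + z)))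

open Set Filter Topology

lemma cexp_sub_natCast_mul_log_mul_pow {t : ℝ} (ht : 0 < t) (w : ℂ) (k : ℕ) :
    exp ((w - k) * Real.log t) * (t : ℂ) ^ k = (t : ℂ) ^ w := by
  have ht' : (t : ℂ) ≠ 0 := ofReal_ne_zero.mpr ht.ne'
  rw [ofReal_log ht.le, mul_comm (w - k), ← cpow_def_of_ne_zero ht', ← cpow_natCast,
    ← cpow_add _ _ ht', sub_add_cancel]

section GammaIntegral

lemma integrableOn_rpow_mul_exp_neg_mul {σ b : ℝ} (hσ : 0 < σ) (hb : 0 < b) :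
    IntegrableOn (fun t : ℝ => t ^ (σ - 1) * Real.exp (-(b * t))) (Ioi 0) := by
  simpa [Real.rpow_one] using
    integrableOn_rpow_mul_exp_neg_mul_rpow (s := σ - 1) (by linarith) one_pos hb

lemma norm_cpow_mul_cexp_neg_mul {t : ℝ} (ht : 0 < t) (s a : ℂ) :
    ‖(t : ℂ) ^ (s - 1) * cexp (-(a * t))‖ = t ^ (s.re - 1) * Real.exp (-(a.re * t)) := by
  simp [norm_cpow_eq_rpow_re_of_pos ht, Complex.norm_exp]

lemma continuousOn_cpow_mul_cexp_neg_mul (s a : ℂ) :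
    ContinuousOn (fun t : ℝ => (t : ℂ) ^ (s - 1) * cexp (-(a * t))) (Ioi 0) := fun t ht =>
  ((continuousAt_ofReal_cpow_const t (s - 1) (Or.inr ht.ne')).mul
    (by fun_prop)).continuousWithinAt

lemma integrableOn_cpow_mul_cexp_neg_mul {s a : ℂ} (hs : 0 < s.re) (ha : 0 < a.re) :
    IntegrableOn (fun t : ℝ => (t : ℂ) ^ (s - 1) * cexp (-(a * t))) (Ioi 0) := by
  refine (integrableOn_rpow_mul_exp_neg_mul hs ha).mono'
    ((continuousOn_cpow_mul_cexp_neg_mul s a).aestronglyMeasurable measurableSet_Ioi) ?_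
  filter_upwards [self_mem_ae_restrict measurableSet_Ioi] with t ht
  exact (norm_cpow_mul_cexp_neg_mul ht s a).le

lemma differentiableOn_integral_cpow_mul_cexp_neg_mul {s : ℂ} (hs : 0 < s.re) :
    DifferentiableOn ℂ (fun a : ℂ => ∫ t in Ioi (0 : ℝ), (t : ℂ) ^ (s - 1) * cexp (-(a * t)))
      {a | 0 < a.re} := by
  intro a ha
  have hε : 0 < a.re / 2 := half_pos ha
  refine DifferentiableAt.differentiableWithinAt (hasDerivAt_integral_of_dominated_loc_of_deriv_le
    (F' := fun b (t : ℝ) => (t : ℂ) ^ (s - 1) * (cexp (-(b * t)) * -t))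
    (bound := fun t : ℝ => t ^ (s.re + 1 - 1) * Real.exp (-(a.re / 2 * t)))
    (Metric.ball_mem_nhds a hε)
    (Eventually.of_forall fun b =>
      (continuousOn_cpow_mul_cexp_neg_mul s b).aestronglyMeasurable measurableSet_Ioi)
    (integrableOn_cpow_mul_cexp_neg_mul hs ha) ?_ ?_
    (integrableOn_rpow_mul_exp_neg_mul (by linarith) hε) ?_).2.differentiableAt
  · refine ContinuousOn.aestronglyMeasurable (fun t ht => ?_) measurableSet_Ioi
    exact ((continuousAt_ofReal_cpow_const t (s - 1) (Or.inr ht.ne')).mul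
      (by fun_prop)).continuousWithinAt
  · filter_upwards [self_mem_ae_restrict measurableSet_Ioi] with t (ht : 0 < t) b hb
    have hb_re : a.re / 2 ≤ b.re := by
      have := (abs_re_le_norm (b - a)).trans_lt (mem_ball_iff_norm.mp hb)
      rw [sub_re, abs_lt] at this
      linarith
    calc ‖(t : ℂ) ^ (s - 1) * (cexp (-(b * t)) * -t)‖
        = t ^ (s.re + 1 - 1) * Real.exp (-(b.re * t)) := by
          rw [← mul_assoc, norm_mul, norm_cpow_mul_cexp_neg_mul ht, norm_neg, norm_real,
            Real.norm_of_nonneg ht.le, add_sub_right_comm, Real.rpow_add_one ht.ne']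
          ring
      _ ≤ t ^ (s.re + 1 - 1) * Real.exp (-(a.re / 2 * t)) := by gcongr
  · filter_upwards with t b _
    exact ((((hasDerivAt_id b).mul_const (t : ℂ)).neg).cexp.const_mul _).congr_deriv (by simp)

lemma integral_cpow_mul_cexp_neg_mul_Ioi {s a : ℂ} (hs : 0 < s.re) (ha : 0 < a.re) :
    ∫ t in Ioi (0 : ℝ), (t : ℂ) ^ (s - 1) * cexp (-(a * t)) = Gamma s * a ^ (-s) := by
  have hU : IsOpen {a : ℂ | 0 < a.re} := isOpen_lt continuous_const continuous_re
  have h_int := (differentiableOn_integral_cpow_mul_cexp_neg_mul hs).analyticOnNhd hU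
  have h_Gamma : AnalyticOnNhd ℂ (fun a : ℂ => Gamma s * a ^ (-s)) {a | 0 < a.re} :=
    DifferentiableOn.analyticOnNhd (fun a ha => ((differentiableAt_id.cpow
      (differentiableAt_const _) (Or.inl ha)).const_mul _).differentiableWithinAt) hU
  have h_real : ∃ᶠ r : ℝ in 𝓝[≠] 1, (∫ t in Ioi (0 : ℝ), (t : ℂ) ^ (s - 1) * cexp (-(r * t)))
      = Gamma s * (r : ℂ) ^ (-s) := by
    refine Eventually.frequently ?_
    filter_upwards [nhdsWithin_le_nhds (lt_mem_nhds one_pos)] with r hr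
    rw [integral_cpow_mul_exp_neg_mul_Ioi hs hr, one_div,
      inv_cpow _ _ (by rw [arg_ofReal_of_nonneg hr.le]; exact Real.pi_ne_zero.symm), ← cpow_neg,
      mul_comm]
  have h_ofReal : Tendsto ((↑) : ℝ → ℂ) (𝓝[≠] 1) (𝓝[≠] 1) :=
    continuous_ofReal.continuousWithinAt.tendsto_nhdsWithin fun _ _ ↦ by simp_all
  exact h_int.eqOn_of_preconnected_of_frequently_eq h_Gamma
    (convex_halfSpace_re_gt 0).isPreconnected (by simp) (h_ofReal.frequently h_real) ha

lemma hasSum_mellin_tsum_mul_cexp_neg_mul {ι : Type*} [Countable ι] {a p : ι → ℂ} {s : ℂ}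
    (hs : 0 < s.re) (hp : ∀ i, 0 < (p i).re)
    (h_sum : Summable fun i => ‖a i‖ / (p i).re ^ s.re) :
    HasSum (fun i => Gamma s * (a i * p i ^ (-s)))
      (mellin (fun t : ℝ => ∑' i, a i * cexp (-(p i * t))) s) := by
  set F : ι → ℝ → ℂ := fun i t => a i * ((t : ℂ) ^ (s - 1) * cexp (-(p i * t)))
  have h_int (i : ι) : Integrable (F i) (volume.restrict (Ioi 0)) :=
    (integrableOn_cpow_mul_cexp_neg_mul hs (hp i)).const_mul (a i)
  have h_norm (i : ι) :
      ∫ t in Ioi (0 : ℝ), ‖F i t‖ = Real.Gamma s.re * (‖a i‖ / (p i).re ^ s.re) := by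
    rw [setIntegral_congr_fun measurableSet_Ioi (fun t ht => by
        rw [norm_mul, norm_cpow_mul_cexp_neg_mul ht]), integral_const_mul,
      Real.integral_rpow_mul_exp_neg_mul_Ioi hs (hp i), Real.div_rpow zero_le_one (hp i).le,
      Real.one_rpow]
    ring
  have h_swap := hasSum_integral_of_summable_integral_norm h_int
    (by simpa only [h_norm] using h_sum.mul_left (Real.Gamma s.re))
  have h_terms : (fun i => ∫ t in Ioi (0 : ℝ), F i t) = fun i => Gamma s * (a i * p i ^ (-s)) := by
    funext i
    rw [integral_const_mul, integral_cpow_mul_cexp_neg_mul_Ioi hs (hp i)]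
    ring
  have h_total : ∫ t in Ioi (0 : ℝ), ∑' i, F i t
      = mellin (fun t : ℝ => ∑' i, a i * cexp (-(p i * t))) s := by
    refine setIntegral_congr_fun measurableSet_Ioi fun t _ => ?_
    rw [smul_eq_mul, ← tsum_mul_left]
    exact tsum_congr fun i => by ring
  rwa [h_terms, h_total] at h_swap

end GammaIntegral

section qAnalogue

noncomputable def qRate (q : ℝ) (w : ℂ) : ℂ := qpow q (-w) * qbr q w

variable {q : ℝ}

lemma qpow_add (q : ℝ) (u v : ℂ) : qpow q (u + v) = qpow q u * qpow q v := by
  rw [qpow, qpow, qpow, add_mul, exp_add]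

@[simp]
lemma qpow_zero (q : ℝ) : qpow q 0 = 1 := by
  rw [qpow, zero_mul, exp_zero]

lemma norm_qpow (hq : 0 < q) (w : ℂ) : ‖qpow q w‖ = q ^ w.re := by
  rw [qpow, norm_exp, Real.rpow_def_of_pos hq, re_mul_ofReal, mul_comm]

lemma re_qpow (hq : 0 < q) (w : ℂ) : (qpow q w).re = q ^ w.re * Real.cos (w.im * Real.log q) := by
  rw [qpow, exp_re, Real.rpow_def_of_pos hq, re_mul_ofReal, im_mul_ofReal, mul_comm w.re]

lemma qRate_eq (q : ℝ) (w : ℂ) : qRate q w = (qpow q (-w) - 1) / (1 - q) := by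
  rw [qRate, qbr, mul_div_assoc', mul_sub, mul_one, ← qpow_add, neg_add_cancel, qpow_zero]

lemma re_qRate (hq : 0 < q) (w : ℂ) :
    (qRate q w).re = (q ^ (-w.re) * Real.cos (w.im * Real.log q) - 1) / (1 - q) := by
  rw [qRate_eq, ← ofReal_one, ← ofReal_sub, div_ofReal_re, sub_re, ofReal_re, re_qpow hq, neg_re,
    neg_im, neg_mul, Real.cos_neg]

lemma rpow_neg_natCast_mul_re_qRate_le (hq0 : 0 < q) (hq1 : q < 1) (n : ℕ) (z : ℂ) :
    q ^ (-(n : ℝ)) * (qRate q z).re ≤ (qRate q (n + z)).re := by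
  have h_one : 1 ≤ q ^ (-(n : ℝ)) :=
    Real.one_le_rpow_of_pos_of_le_one_of_nonpos hq0 hq1.le (by simp)
  rw [re_qRate hq0, re_qRate hq0, mul_div_assoc', add_re, add_im, natCast_re, natCast_im,
    zero_add, neg_add, Real.rpow_add hq0]
  gcongr
  linarith

lemma re_qRate_natCast_add_pos (hq0 : 0 < q) (hq1 : q < 1) {z : ℂ} (hz : 0 < (qRate q z).re)
    (n : ℕ) : 0 < (qRate q (n + z)).re :=
  (mul_pos (by positivity) hz).trans_le (rpow_neg_natCast_mul_re_qRate_le hq0 hq1 n z)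

lemma log_qbr {w : ℂ} (hw : |w.im * Real.log q| < Real.pi / 2)
    (hre : 0 < (qRate q w).re) : log (qbr q w) = w * Real.log q + log (qRate q w) := by
  have hne : qRate q w ≠ 0 := fun h => by simp [h] at hre
  have harg := abs_lt.mp (abs_arg_lt_pi_div_two_iff.mpr (Or.inl hre))
  have hbr : qbr q w = exp (w * Real.log q + log (qRate q w)) := by
    rw [exp_add, exp_log hne, qRate, ← mul_assoc, ← qpow, ← qpow_add, add_neg_cancel, qpow_zero,
      one_mul]
  have him : (w * Real.log q + log (qRate q w)).im = w.im * Real.log q + arg (qRate q w) := by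
    rw [add_im, im_mul_ofReal, log_im]
  rw [hbr, log_exp] <;> rw [him] <;> linarith [abs_lt.mp hw]

lemma qpow_mul_qRate_cpow_neg {w : ℂ} (hw : |w.im * Real.log q| < Real.pi / 2)
    (hre : 0 < (qRate q w).re) (c s : ℂ) :
    qpow q (-c * w) * qRate q w ^ (-s) = qpow q (w * (s - c)) * exp (-s * log (qbr q w)) := by
  have hne : qRate q w ≠ 0 := fun h => by simp [h] at hre
  rw [cpow_def_of_ne_zero hne, qpow, qpow, log_qbr hw hre, ← exp_add, ← exp_add]
  ring_nf

lemma summable_norm_qpow_div_re_qRate_rpow (hq0 : 0 < q) (hq1 : q < 1) {z : ℂ}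
    (hz : 0 < (qRate q z).re) {c σ : ℝ} (hcσ : c < σ) (hσ : 0 ≤ σ) :
    Summable fun n : ℕ => ‖qpow q (-c * (n + z))‖ / (qRate q (n + z)).re ^ σ := by
  set δ := (qRate q z).re
  have h_geom : Summable fun n : ℕ => q ^ (-c * z.re) / δ ^ σ * (q ^ (σ - c)) ^ n :=
    (summable_geometric_of_lt_one (Real.rpow_nonneg hq0.le _)
      (Real.rpow_lt_one hq0.le hq1 (by linarith))).mul_left _
  refine h_geom.of_nonneg_of_le (fun n => div_nonneg (norm_nonneg _)
    (Real.rpow_nonneg (re_qRate_natCast_add_pos hq0 hq1 hz n).le _)) fun n => ?_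
  have h_le : q ^ (-(n : ℝ)) * δ ≤ (qRate q (n + z)).re :=
    rpow_neg_natCast_mul_re_qRate_le hq0 hq1 n z
  calc ‖qpow q (-c * (n + z))‖ / (qRate q (n + z)).re ^ σ
      = q ^ (-c * (n + z.re)) / (qRate q (n + z)).re ^ σ := by
        rw [norm_qpow hq0]
        simp
    _ ≤ q ^ (-c * (n + z.re)) / (q ^ (-(n : ℝ)) * δ) ^ σ :=
        div_le_div_of_nonneg_left (by positivity) (by positivity)
          (Real.rpow_le_rpow (by positivity) h_le hσ)
    _ = q ^ (-c * z.re) / δ ^ σ * (q ^ (σ - c)) ^ n := by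
        rw [Real.mul_rpow (by positivity) hz.le, ← Real.rpow_natCast, ← Real.rpow_mul hq0.le,
          ← Real.rpow_mul hq0.le]
        simp only [Real.rpow_def_of_pos hq0]
        field_simp
        rw [← Real.exp_add, ← Real.exp_add]
        ring_nf

lemma FpTerm_eq (q : ℝ) (ν : ℕ) (t z : ℂ) (n : ℕ) :
    FpTerm q ν t z n = qpow q (-(ν : ℂ) * (n + z)) * exp (-(qRate q (n + z) * t)) := by
  rw [FpTerm, qRate]
  ring_nf

end qAnalogue

theorem stmt6_general (q : ℝ) (hq0 : 0 < q) (hq1 : q < 1) (ν : ℕ)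
    (z : ℂ) (hz : |z.im| < Real.pi / (2 * |Real.log q|))
    (hz' : 0 < z.re ∧ 1 < q ^ (-z.re) * Real.cos (z.im * Real.log q))
    (s : ℂ) (hs : (ν : ℝ) + 1 < s.re) :
    Complex.Gamma s * zetaQ q ν s z =
      ∫ t in Set.Ioi (0 : ℝ),
        Complex.exp ((s - (ν : ℂ) - 1) * Real.log t) * Fp q ν (t : ℂ) z := by
  have h_im (n : ℕ) : |((n : ℂ) + z).im * Real.log q| < Real.pi / 2 := by
    have hL : 0 < |Real.log q| := abs_pos.mpr (Real.log_neg hq0 hq1).ne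
    have := (lt_div_iff₀ (by positivity)).mp hz
    rw [add_im, natCast_im, zero_add, abs_mul]
    linarith
  have h_rate : 0 < (qRate q z).re := by
    rw [re_qRate hq0]
    exact div_pos (by linarith [hz'.2]) (by linarith)
  have h_rate_n := re_qRate_natCast_add_pos hq0 hq1 h_rate
  have h_summable := summable_norm_qpow_div_re_qRate_rpow (c := ν) (σ := s.re) hq0 hq1 h_rate
    (by linarith) (by linarith)
  push_cast at h_summable
  have h_sum := hasSum_mellin_tsum_mul_cexp_neg_mul (s := s) (by linarith) h_rate_n h_summable
  calc Gamma s * zetaQ q ν s z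
      = ∑' n : ℕ, Gamma s * (qpow q (-(ν : ℂ) * (n + z)) * qRate q (n + z) ^ (-s)) := by
        rw [zetaQ, ← tsum_mul_left]
        exact tsum_congr fun n => by rw [qpow_mul_qRate_cpow_neg (h_im n) (h_rate_n n)]
    _ = _ := h_sum.tsum_eq
    _ = _ := by
        refine setIntegral_congr_fun measurableSet_Ioi fun t (ht : 0 < t) => ?_
        rw [Fp, ← mul_assoc, sub_right_comm, cexp_sub_natCast_mul_log_mul_pow ht, smul_eq_mul]
        simp only [FpTerm_eq]

theorem stmt6 (q : ℝ) (hq0 : 0 < q) (hq1 : q < 1) (ν : ℕ) (hν : 0 < ν)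
    (z : ℂ) (hz : |z.im| < Real.pi / (2 * |Real.log q|))
    (hz' : 0 < z.re ∧ 1 < q ^ (-z.re) * Real.cos (z.im * Real.log q))
    (s : ℂ) (hs : (ν : ℝ) + 1 < s.re) :
    Complex.Gamma s * zetaQ q ν s z =
      ∫ t in Set.Ioi (0 : ℝ),
        Complex.exp ((s - (ν : ℂ) - 1) * Real.log t) * Fp q ν (t : ℂ) z :=
  stmt6_general q hq0 hq1 ν z hz hz' s hs
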